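/- Let μ be a bounded measured lamination on the punctured hyperbolic surface (or leaf) such that its support contains a geodesic g with an endpoint at a cusp, and suppose the support is invariant under powers A^{kn} (n ∈ ℕ, fixed k > 0) of the parabolic element A fixing that cusp. If g is an isolated leaf of the support carrying an atom of mass m > 0, then the transverse measure μ is unbounded: sup over unit-length geodesic arcs I of μ(I) = ∞. Hence no bounded measured lamination invariant under a parabolic in this way can contain a geodesic ending at the cusp with positive atomic mass. -/

import Mathlib

open Complex MeasureTheory Filter Topology Set
open scoped ENNReal

noncomputable section

/-- The open unit disk. -/
def Disk : Set ℂ := Metric.ball 0 1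

/-- The hyperbolic (Poincaré) distance on the unit disk:
`d(z,w) = arcosh (1 + 2|z-w|² / ((1-|z|²)(1-|w|²)))`. -/
def hDist (z w : ℂ) : ℝ :=
  Real.log ((1 + 2 * (‖z - w‖)^2 / ((1 - (‖z‖)^2) * (1 - (‖w‖)^2))) +
    Real.sqrt ((1 + 2 * (‖z - w‖)^2 / ((1 - (‖z‖)^2) * (1 - (‖w‖)^2)))^2 - 1))

/-- A Möbius transformation preserving the unit disk. -/
def IsDiskMobius (T : ℂ → ℂ) : Prop :=
  ∃ u α : ℂ, ‖u‖ = 1 ∧ ‖α‖ < 1 ∧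
    ∀ z : ℂ, T z = u * (z - α) / (1 - (starRingEnd ℂ) α * z)

/-- `z` is an (interior) point of the hyperbolic geodesic of the unit disk with ideal
endpoints `a, b` on the unit circle. -/
def onGeod (a b z : ℂ) : Prop :=
  z ∈ Disk ∧ ‖(z - a) * (z - b)‖ = (1 - (‖z‖)^2) / 2 * ‖a - b‖

/-- The space of geodesics of the unit disk: ordered pairs of distinct circle points. -/
def GeodSub : Set (ℂ × ℂ) :=
  {p : ℂ × ℂ | ‖p.1‖ = 1 ∧ ‖p.2‖ = 1 ∧ p.1 ≠ p.2}

/-- The set of geodesics crossing the closed hyperbolic geodesic arc `[z,w]`. -/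
def crossing (z w : ℂ) : Set (ℂ × ℂ) :=
  {g ∈ GeodSub | ∃ u ∈ Disk, onGeod g.1 g.2 u ∧ hDist z u + hDist u w = hDist z w}

/-- The Thurston norm of a measure on the space of geodesics:
the supremum of the masses of the sets of geodesics crossing a geodesic arc of
hyperbolic length `1`. -/
def mnorm (μ : Measure (ℂ × ℂ)) : ℝ≥0∞ :=
  ⨆ (z : ℂ) (w : ℂ) (_ : z ∈ Disk) (_ : w ∈ Disk) (_ : hDist z w = 1), μ (crossing z w)

/-- A geodesic lamination: a relatively closed set of pairwise non-crossing geodesics. -/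
def GeodesicLamination (Λ : Set (ℂ × ℂ)) : Prop :=
  Λ ⊆ GeodSub ∧ closure Λ ∩ GeodSub ⊆ Λ ∧
  ∀ g ∈ Λ, ∀ g' ∈ Λ, ∀ z : ℂ, onGeod g.1 g.2 z → onGeod g'.1 g'.2 z →
    ({g.1, g.2} : Set ℂ) = {g'.1, g'.2}

/-- The union of the geodesics of a lamination, as a subset of the disk. -/
def lamSet (Λ : Set (ℂ × ℂ)) : Set ℂ := {z : ℂ | ∃ g ∈ Λ, onGeod g.1 g.2 z}

/-- A stratum of a geodesic lamination: a geodesic of the lamination, or a connected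
component of the complement of the lamination in the disk. -/
def IsStratum (Λ : Set (ℂ × ℂ)) (A : Set ℂ) : Prop :=
  (∃ g ∈ Λ, A = {z : ℂ | onGeod g.1 g.2 z}) ∨
  (∃ z ∈ Disk \ lamSet Λ, A = connectedComponentIn (Disk \ lamSet Λ) z)

/-- `h` is a hyperbolic translation of the unit disk whose axis (the geodesic with ideal
endpoints `q`, `p`) separates `A` from `B` and which translates `B` to the left as seen
from `A`: after a Möbius change of coordinates taking `q ↦ -1`, `p ↦ 1` (so that `A` lies
on the left of the axis oriented from `q` to `p`), `h` becomes the hyperbolic translation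
`z ↦ (z + t)/(1 + t z)`, `0 < t < 1`, towards the attracting fixed point `p`. -/
def IsLeftTranslationFor (h : ℂ → ℂ) (A B : Set ℂ) : Prop :=
  ∃ (q p : ℂ) (M : ℂ → ℂ) (t : ℝ), IsDiskMobius M ∧
    ‖q‖ = 1 ∧ ‖p‖ = 1 ∧ M q = -1 ∧ M p = 1 ∧ 0 < t ∧ t < 1 ∧
    (∀ z : ℂ, ‖z‖ ≤ 1 → M (h z) = (M z + (t : ℂ)) / (1 + (t : ℂ) * M z)) ∧
    (∀ a ∈ A, a ∈ Disk → ¬ onGeod q p a → 0 < (M a).im) ∧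
    (∀ b ∈ B, b ∈ Disk → ¬ onGeod q p b → (M b).im < 0)

/-- An earthquake of the unit disk with support lamination `Λ` (Thurston):  a bijection of
the disk which restricts to a hyperbolic isometry on each stratum of `Λ`, such that the
comparison isometry `E|_B ∘ (E|_A)⁻¹` of any two distinct strata is a hyperbolic
translation whose axis separates `A` from `B` and which translates `B` to the left as
seen from `A`. -/
def IsEarthquake (E : ℂ → ℂ) (Λ : Set (ℂ × ℂ)) : Prop :=
  GeodesicLamination Λ ∧ Set.BijOn E Disk Disk ∧
  (∀ A : Set ℂ, IsStratum Λ A → ∃ T : ℂ → ℂ, IsDiskMobius T ∧ Set.EqOn E T A) ∧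
  (∀ A B : Set ℂ, IsStratum Λ A → IsStratum Λ B → A ≠ B →
    ∃ TA TB SA : ℂ → ℂ, IsDiskMobius TA ∧ IsDiskMobius TB ∧ IsDiskMobius SA ∧
      (∀ z : ℂ, ‖z‖ ≤ 1 → SA (TA z) = z) ∧
      Set.EqOn E TA A ∧ Set.EqOn E TB B ∧
      IsLeftTranslationFor (TB ∘ SA) A B)

/-- The hyperbolic translation length of a map of the disk. -/
def transLength (h : ℂ → ℂ) : ℝ := sInf {r : ℝ | ∃ z ∈ Disk, r = hDist z (h z)}

/-- `h` represents the comparison isometry `E|_B ∘ (E|_A)⁻¹` of the strata `A`, `B`. -/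
def ComparisonIs (E : ℂ → ℂ) (A B : Set ℂ) (h : ℂ → ℂ) : Prop :=
  ∃ TA TB SA : ℂ → ℂ, IsDiskMobius TA ∧ IsDiskMobius TB ∧ IsDiskMobius SA ∧
    (∀ z : ℂ, ‖z‖ ≤ 1 → SA (TA z) = z) ∧
    Set.EqOn E TA A ∧ Set.EqOn E TB B ∧ h = TB ∘ SA

/-- The translation length of the comparison isometry of two strata. -/
def compLen (E : ℂ → ℂ) (A B : Set ℂ) : ℝ :=
  sInf {r : ℝ | ∃ h : ℂ → ℂ, ComparisonIs E A B h ∧ r = transLength h}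

/-- `μ` is the earthquake measure of the earthquake `E` with support `Λ` (Thurston):
`μ` is a positive Radon measure on the space of geodesics whose support is the geodesic
lamination `Λ`, and for every closed geodesic arc `[z,w]`, the `μ`-mass of the geodesics
crossing `[z,w]` is approximated by the sums of translation lengths of the comparison
isometries of finitely many consecutive strata meeting `[z,w]`, as the gaps between
adjacent chosen strata tend to zero. -/
def EarthquakeMeasureOf (E : ℂ → ℂ) (Λ : Set (ℂ × ℂ)) (μ : Measure (ℂ × ℂ)) : Prop :=
  IsEarthquake E Λ ∧ μ Λᶜ = 0 ∧
  (∀ U : Set (ℂ × ℂ), IsOpen U → (U ∩ Λ).Nonempty → μ U ≠ 0) ∧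
  (∀ z ∈ Disk, ∀ w ∈ Disk, ∀ ε : ℝ, 0 < ε → ∃ δ : ℝ, 0 < δ ∧
    ∀ (N : ℕ) (u : Fin (N + 1) → ℂ) (St : Fin (N + 1) → Set ℂ),
      (∀ i, IsStratum Λ (St i) ∧ u i ∈ St i ∧ u i ∈ Disk ∧
        hDist z (u i) + hDist (u i) w = hDist z w) →
      (∀ i j : Fin (N + 1), i ≤ j → hDist z (u i) ≤ hDist z (u j)) →
      Function.Injective St →
      hDist z (u 0) < δ → hDist (u (Fin.last N)) w < δ →
      (∀ i : Fin N, hDist (u i.castSucc) (u i.succ) < δ) →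
      |(∑ i : Fin N, compLen E (St i.castSucc) (St i.succ)) - (μ (crossing z w)).toReal| < ε)

/-- `h` is (the boundary value of) an earthquake of the unit disk with earthquake
measure `μ`: `h` is the continuous extension to the unit circle of an earthquake map
whose Thurston earthquake measure is `μ`. -/
def EarthquakeBoundary (μ : Measure (ℂ × ℂ)) (h : ℂ → ℂ) : Prop :=
  ∃ (E : ℂ → ℂ) (Λ : Set (ℂ × ℂ)), EarthquakeMeasureOf E Λ μ ∧
    ∀ x : ℂ, ‖x‖ = 1 → Filter.Tendsto E (nhdsWithin x Disk) (nhds (h x))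


/-- The angle metric on the unit circle. -/
def dCircle (x y : ℂ) : ℝ := |Complex.arg (x * (starRingEnd ℂ) y)|

/-- The angle metric on the space of geodesics (pairs of circle points). -/
def dG (p q : ℂ × ℂ) : ℝ := max (dCircle p.1 q.1) (dCircle p.2 q.2)

/-!
Conjugating by the Cayley transform, which sends `∞` to the cusp `1`, the parabolic `A` acts on
the boundary line as a real translation `x ↦ x + τ`, `τ ≠ 0`. Hence the translates `A^{kn}(g)`
are the vertical geodesics over `x₀ + k n τ`, each of mass at least `m`. A geodesic arc of
length `1` near the top of a semicircle of radius `R ≫ N k |τ|` crosses the first `N` of them,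
so `‖μ‖ ≥ N m` for every `N`.
-/

open ComplexConjugate

/-- The Cayley transform of the upper half-plane onto the disk; it sends `∞` to the cusp `1`. -/
def cayley (w : ℂ) : ℂ := (w - I) / (w + I)

lemma add_I_ne_zero {w : ℂ} (hw : 0 ≤ w.im) : w + I ≠ 0 := by
  intro h
  have := congrArg Complex.im h
  simp only [add_im, I_im, zero_im] at this
  linarith

lemma normSq_add_I_ne_zero {w : ℂ} (hw : 0 ≤ w.im) : normSq (w + I) ≠ 0 :=
  (normSq_pos.mpr (add_I_ne_zero hw)).ne'

lemma cayley_sub_cayley {z w : ℂ} (hz : 0 ≤ z.im) (hw : 0 ≤ w.im) :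
    cayley z - cayley w = 2 * I * (z - w) / ((z + I) * (w + I)) := by
  rw [cayley, cayley, div_sub_div _ _ (add_I_ne_zero hz) (add_I_ne_zero hw)]
  ring

lemma cayley_sub_one {w : ℂ} (hw : 0 ≤ w.im) : cayley w - 1 = -2 * I / (w + I) := by
  rw [cayley, div_sub_one (add_I_ne_zero hw)]
  ring

lemma one_sub_norm_cayley_sq {w : ℂ} (hw : 0 < w.im) :
    1 - ‖cayley w‖ ^ 2 = 4 * w.im / normSq (w + I) := by
  have hne := normSq_add_I_ne_zero hw.le
  rw [Complex.sq_norm, cayley, normSq_div, eq_div_iff hne, sub_mul, div_mul_cancel₀ _ hne]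
  simp only [normSq_apply, add_re, add_im, sub_re, sub_im, I_re, I_im]
  ring

lemma cayley_mem_disk {w : ℂ} (hw : 0 < w.im) : cayley w ∈ Disk := by
  have hpos : 0 < 4 * w.im / normSq (w + I) :=
    div_pos (by linarith) (normSq_pos.mpr (add_I_ne_zero hw.le))
  rw [← one_sub_norm_cayley_sq hw, sub_pos] at hpos
  simpa [Disk] using (sq_lt_one_iff₀ (norm_nonneg _)).mp hpos

lemma hDist_cayley {z w : ℂ} (hz : 0 < z.im) (hw : 0 < w.im) :
    hDist (cayley z) (cayley w) = Real.arcosh (1 + normSq (z - w) / (2 * z.im * w.im)) := by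
  have hz' := normSq_add_I_ne_zero hz.le
  have hw' := normSq_add_I_ne_zero hw.le
  have hratio : 2 * ‖cayley z - cayley w‖ ^ 2 / ((1 - ‖cayley z‖ ^ 2) * (1 - ‖cayley w‖ ^ 2)) =
      normSq (z - w) / (2 * z.im * w.im) := by
    rw [one_sub_norm_cayley_sq hz, one_sub_norm_cayley_sq hw, cayley_sub_cayley hz.le hw.le,
      Complex.sq_norm, normSq_div, normSq_mul, normSq_mul, normSq_mul, normSq_I,
      show normSq 2 = 4 by norm_num [normSq_apply]]
    field_simp
    ring
  rw [hDist, hratio]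
  rfl

lemma norm_cayley_ofReal (x : ℝ) : ‖cayley x‖ = 1 := by
  rw [cayley, norm_div, div_eq_one_iff_eq (norm_ne_zero_iff.mpr (add_I_ne_zero (by simp))),
    ← norm_conj]
  simp

lemma cayley_ofReal_ne_one (x : ℝ) : cayley x ≠ 1 := by
  rw [cayley, Ne, div_eq_one_iff_eq (add_I_ne_zero (by simp))]
  intro h
  have := congrArg Complex.im h
  simp at this
  linarith

lemma cayley_ofReal_injective : Function.Injective (fun x : ℝ => cayley x) := by
  intro x y h
  simp only [cayley] at h
  rw [div_eq_div_iff (add_I_ne_zero (by simp)) (add_I_ne_zero (by simp))] at h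
  have : (2 * I) * (x : ℂ) = (2 * I) * y := by linear_combination h
  exact_mod_cast mul_left_cancel₀ (by simp) this

lemma exists_cayley_ofReal_eq {z : ℂ} (hz : ‖z‖ = 1) (hz1 : z ≠ 1) :
    ∃ x : ℝ, cayley x = z := by
  have hcircle : z.re ^ 2 + z.im ^ 2 = 1 := by
    have := normSq_eq_norm_sq z
    rw [hz, normSq_apply] at this
    linear_combination this
  have hre : 1 - z.re ≠ 0 := by
    intro h
    refine hz1 (Complex.ext (by simp; linarith) ?_)
    simpa using (show z.im ^ 2 = 0 by nlinarith)
  obtain ⟨x, hx⟩ : ∃ x : ℝ, x * (1 - z.re) = -z.im := ⟨_, div_mul_cancel₀ _ hre⟩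
  have hx' : (z.im * x + 1 + z.re) * (1 - z.re) = 0 := by
    linear_combination z.im * hx - hcircle
  refine ⟨x, ?_⟩
  rw [cayley, div_eq_iff (add_I_ne_zero (by simp))]
  apply Complex.ext
  · simp only [sub_re, ofReal_re, I_re, mul_re, add_re, ofReal_im, add_im, I_im]
    linear_combination hx
  · simp only [sub_im, ofReal_im, I_im, mul_im, add_re, ofReal_re, add_im, I_re]
    linear_combination -(mul_eq_zero.mp hx').resolve_right hre

lemma onGeod_cayley_vertical (x y : ℝ) (hy : 0 < y) :
    onGeod 1 (cayley x) (cayley ⟨x, y⟩) := by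
  have hy' : (0 : ℝ) < (⟨x, y⟩ : ℂ).im := hy
  refine ⟨cayley_mem_disk hy', ?_⟩
  have hvert : (⟨x, y⟩ : ℂ) - x = y * I := Complex.ext (by simp) (by simp)
  have hw := norm_pos_iff.mpr (add_I_ne_zero hy'.le)
  have hx := norm_pos_iff.mpr (add_I_ne_zero (w := x) (by simp))
  rw [← neg_sub (cayley x) 1, norm_neg, cayley_sub_one hy'.le, cayley_sub_one (by simp),
    cayley_sub_cayley hy'.le (by simp), one_sub_norm_cayley_sq hy', hvert, ← Complex.sq_norm]
  simp only [norm_mul, norm_div, norm_neg, norm_I, Complex.norm_ofNat, norm_real,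
    Real.norm_of_nonneg hy.le]
  field_simp
  ring

/-- The point `c + R e^{iθ}` of the upper half-plane, parametrised by `t = tan (θ / 2)`. -/
def semicirclePt (c R t : ℝ) : ℂ := ⟨c + R * (1 - t ^ 2) / (1 + t ^ 2), 2 * R * t / (1 + t ^ 2)⟩

lemma semicirclePt_im_pos {c R t : ℝ} (hR : 0 < R) (ht : 0 < t) : 0 < (semicirclePt c R t).im :=
  div_pos (by positivity) (by positivity)

lemma hDist_cayley_semicirclePt {c R t₁ t₂ : ℝ} (hR : 0 < R) (ht₂ : 0 < t₂) (h : t₂ ≤ t₁) :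
    hDist (cayley (semicirclePt c R t₁)) (cayley (semicirclePt c R t₂)) =
      Real.log t₁ - Real.log t₂ := by
  have ht₁ : 0 < t₁ := ht₂.trans_le h
  have hcosh : 1 + normSq (semicirclePt c R t₁ - semicirclePt c R t₂) /
      (2 * (semicirclePt c R t₁).im * (semicirclePt c R t₂).im) =
      Real.cosh (Real.log (t₁ / t₂)) := by
    rw [Real.cosh_log (div_pos ht₁ ht₂)]
    simp only [semicirclePt, normSq_apply, sub_re, sub_im]
    field_simp
    ring
  rw [hDist_cayley (semicirclePt_im_pos hR ht₁) (semicirclePt_im_pos hR ht₂), hcosh,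
    Real.arcosh_cosh (Real.log_nonneg ((one_le_div ht₂).mpr h)), Real.log_div ht₁.ne' ht₂.ne']

lemma exists_semicirclePt_re_eq {c R d : ℝ} (hR : 0 < R) (hd : |d| ≤ R / 3) :
    ∃ t ∈ Icc (Real.exp (-1 / 2)) (Real.exp (1 / 2)), (semicirclePt c R t).re = c + d := by
  obtain ⟨hd₁, hd₂⟩ := abs_le.mp hd
  have hRd₁ : 0 < R + d := by linarith
  have hRd₂ : 0 < R - d := by linarith
  have he : 2 ≤ Real.exp 1 := by linarith [Real.add_one_le_exp 1]
  set q := (R - d) / (R + d)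
  have hq : 0 < q := div_pos hRd₂ hRd₁
  have hq_le : q ≤ Real.exp 1 := by
    rw [div_le_iff₀ hRd₁]
    nlinarith
  have hq_ge : Real.exp (-1) ≤ q := by
    have hhalf : Real.exp (-1) ≤ 1 / 2 := by
      rw [Real.exp_neg]
      exact inv_le_of_inv_le₀ (by norm_num) (by linarith)
    rw [le_div_iff₀ hRd₁]
    nlinarith
  refine ⟨√q, ⟨?_, ?_⟩, ?_⟩
  · rw [Real.exp_half]
    exact Real.sqrt_le_sqrt hq_ge
  · rw [Real.exp_half]
    exact Real.sqrt_le_sqrt hq_le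
  · simp only [semicirclePt, Real.sq_sqrt hq.le, q]
    field_simp
    ring

lemma exists_unit_arc_crossing_verticals (c D : ℝ) :
    ∃ z ∈ Disk, ∃ w ∈ Disk, hDist z w = 1 ∧
      ∀ x : ℝ, |x - c| ≤ D → ((1 : ℂ), cayley x) ∈ crossing z w := by
  set R := 3 * |D| + 3
  have hR : 0 < R := by positivity
  set t₁ := Real.exp (1 / 2)
  set t₂ := Real.exp (-1 / 2)
  have ht₂ : 0 < t₂ := Real.exp_pos _
  have ht₂₁ : t₂ ≤ t₁ := Real.exp_le_exp.mpr (by norm_num)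
  refine ⟨cayley (semicirclePt c R t₁), cayley_mem_disk (semicirclePt_im_pos hR (Real.exp_pos _)),
    cayley (semicirclePt c R t₂), cayley_mem_disk (semicirclePt_im_pos hR ht₂), ?_, ?_⟩
  · rw [hDist_cayley_semicirclePt hR ht₂ ht₂₁, Real.log_exp, Real.log_exp]
    norm_num
  intro x hx
  obtain ⟨t, ⟨ht₂t, ht₁t⟩, hre⟩ :=
    exists_semicirclePt_re_eq (c := c) (d := x - c) hR (by linarith [le_abs_self D])
  have ht : 0 < t := ht₂.trans_le ht₂t
  have hvert : semicirclePt c R t = ⟨x, (semicirclePt c R t).im⟩ :=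
    Complex.ext (by rw [hre]; ring) rfl
  refine ⟨⟨norm_one, norm_cayley_ofReal x, (cayley_ofReal_ne_one x).symm⟩,
    cayley (semicirclePt c R t), cayley_mem_disk (semicirclePt_im_pos hR ht), ?_, ?_⟩
  · rw [hvert]
    exact onGeod_cayley_vertical x _ (semicirclePt_im_pos hR ht)
  · rw [hDist_cayley_semicirclePt hR ht ht₁t, hDist_cayley_semicirclePt hR ht₂ ht₂t,
      hDist_cayley_semicirclePt hR ht₂ ht₂₁]
    ring

lemma measure_crossing_le_mnorm (μ : Measure (ℂ × ℂ)) {z w : ℂ} (hz : z ∈ Disk) (hw : w ∈ Disk)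
    (hzw : hDist z w = 1) : μ (crossing z w) ≤ mnorm μ :=
  le_iSup_of_le z <| le_iSup_of_le w <| le_iSup_of_le hz <| le_iSup_of_le hw <|
    le_iSup_of_le hzw le_rfl

/-- The first `N` of these leaves all cross one arc of length `1` near the top of a large
semicircle. -/
lemma mnorm_eq_top_of_vertical_atoms (μ : Measure (ℂ × ℂ)) {c : ℝ≥0∞} (hc : c ≠ 0)
    {x₀ τ : ℝ} (hτ : τ ≠ 0) (hatoms : ∀ n : ℕ, c ≤ μ {((1 : ℂ), cayley ((x₀ + n * τ : ℝ) : ℂ))}) :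
    mnorm μ = ⊤ := by
  by_contra hfin
  obtain ⟨N, hN⟩ := ENNReal.exists_nat_mul_gt hc hfin
  set γ : ℕ → ℂ × ℂ := fun n => ((1 : ℂ), cayley ((x₀ + n * τ : ℝ) : ℂ))
  have hγ : Function.Injective γ := by
    intro a b hab
    have : x₀ + a * τ = x₀ + b * τ := cayley_ofReal_injective (congrArg Prod.snd hab)
    exact_mod_cast mul_right_cancel₀ hτ (add_left_cancel this)
  obtain ⟨z, hz, w, hw, hzw, hcross⟩ := exists_unit_arc_crossing_verticals x₀ (N * |τ|)
  have hsub : ↑((Finset.range N).image γ) ⊆ crossing z w := by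
    intro p hp
    obtain ⟨n, hn, rfl⟩ := Finset.mem_image.mp (Finset.mem_coe.mp hp)
    refine hcross (x₀ + n * τ) ?_
    rw [add_sub_cancel_left, abs_mul, Nat.abs_cast]
    gcongr
    exact_mod_cast (Finset.mem_range.mp hn).le
  refine (hN.trans_le ?_).false
  calc (N : ℝ≥0∞) * c = ∑ _n ∈ Finset.range N, c := by simp
    _ ≤ ∑ n ∈ Finset.range N, μ {γ n} := Finset.sum_le_sum fun n _ => hatoms n
    _ = μ ↑((Finset.range N).image γ) := by
      rw [← sum_measure_singleton, Finset.sum_image fun a _ b _ h => hγ h]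
    _ ≤ μ (crossing z w) := measure_mono hsub
    _ ≤ mnorm μ := measure_crossing_le_mnorm μ hz hw hzw

lemma one_sub_conj_mul_ne_zero {α z : ℂ} (hα : ‖α‖ < 1) (hz : ‖z‖ ≤ 1) : 1 - conj α * z ≠ 0 := by
  intro h
  have : ‖conj α * z‖ = 1 := by rw [← sub_eq_zero.mp h, norm_one]
  rw [norm_mul, norm_conj] at this
  nlinarith [norm_nonneg α, norm_nonneg z]

/-- The fixed point `1` gives the second identity; the other root `-u α / ᾱ` of the fixed-point
equation lies on the circle, hence is `1` as well, which gives the third. -/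
lemma coeff_eq_of_parabolic {A : ℂ → ℂ} {u α : ℂ} (hu : ‖u‖ = 1) (hα : ‖α‖ < 1)
    (hA : ∀ z, A z = u * (z - α) / (1 - conj α * z))
    (hparab : ∀ z : ℂ, ‖z‖ ≤ 1 → (A z = z ↔ z = 1)) :
    conj α ≠ 0 ∧ u * (1 - α) = 1 - conj α ∧ u * α = -conj α := by
  have hfix : ∀ z, ‖z‖ ≤ 1 → u * (z - α) = z * (1 - conj α * z) → z = 1 := fun z hz h =>
    (hparab z hz).mp (by rw [hA, div_eq_iff (one_sub_conj_mul_ne_zero hα hz), h])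
  have hα₀ : conj α ≠ 0 := by
    rw [map_ne_zero]
    rintro rfl
    exact zero_ne_one (hfix 0 (by simp) (by simp))
  have h₁ : u * (1 - α) = 1 - conj α := by
    have := (hparab 1 (by simp)).mpr rfl
    rwa [hA, div_eq_one_iff_eq (one_sub_conj_mul_ne_zero hα (by simp)), mul_one] at this
  refine ⟨hα₀, h₁, ?_⟩
  have hnorm : ‖-u * α / conj α‖ = 1 := by
    rw [norm_div, norm_mul, norm_neg, hu, one_mul, norm_conj,
      div_self (norm_ne_zero_iff.mpr ((map_ne_zero _).mp hα₀))]
  have h₂ := hfix _ hnorm.le (by field_simp; linear_combination (-u * α) * h₁)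
  field_simp at h₂
  linear_combination -h₂

lemma IsDiskMobius.exists_translation_of_parabolic {A : ℂ → ℂ} (hA : IsDiskMobius A)
    (hparab : ∀ z : ℂ, ‖z‖ ≤ 1 → (A z = z ↔ z = 1)) :
    ∃ τ : ℝ, τ ≠ 0 ∧ ∀ x : ℝ, A (cayley x) = cayley ((x + τ : ℝ) : ℂ) := by
  obtain ⟨u, α, hu, hα, hAf⟩ := hA
  obtain ⟨hβ₀, h₁, h₂⟩ := coeff_eq_of_parabolic hu hα hAf hparab
  have hβ₁ : 1 - conj α ≠ 0 := by simpa using one_sub_conj_mul_ne_zero hα (z := 1) (by simp)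
  have hα₁ : 1 - α ≠ 0 := by simpa using (map_ne_zero (starRingEnd ℂ)).mpr hβ₁
  have hu' : u = 1 - 2 * conj α := by linear_combination h₁ + h₂
  have hrel : α + conj α = 2 * α * conj α := by linear_combination h₂ - α * hu'
  set τ : ℂ := 2 * I * conj α / (1 - conj α)
  have hτ : τ * (1 - conj α) = 2 * I * conj α := div_mul_cancel₀ _ hβ₁
  have hτ_real : ((τ.re : ℝ) : ℂ) = τ := by
    refine conj_eq_iff_re.mp ?_
    simp only [τ, map_div₀, map_mul, map_sub, map_one, conj_I, conj_conj, map_ofNat]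
    rw [div_eq_div_iff hα₁ hβ₁]
    linear_combination (-2 * I) * hrel
  refine ⟨τ.re, ?_, fun x => ?_⟩
  · rw [← ofReal_ne_zero, hτ_real]
    exact div_ne_zero (by simp [hβ₀, I_ne_zero]) hβ₁
  have hL := one_sub_conj_mul_ne_zero hα (norm_cayley_ofReal x).le
  have hR : (x : ℂ) + τ + I ≠ 0 := by
    rw [← hτ_real, ← ofReal_add]
    exact add_I_ne_zero (by simp)
  have hI : (x : ℂ) + I ≠ 0 := add_I_ne_zero (by simp)
  have hc : cayley x * (x + I) = x - I := div_mul_cancel₀ _ hI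
  push_cast
  rw [hτ_real, hAf, show cayley (x + τ) = (x + τ - I) / (x + τ + I) from rfl,
    div_eq_div_iff hL hR]
  refine mul_left_cancel₀ hI ?_
  linear_combination (u * (x + τ + I) + conj α * (x + τ - I)) * hc
    + (x - I) * (x + τ + I) * hu' - (x + I) * (x + τ + I) * h₂ - 2 * I * hτ

lemma iterate_cayley_ofReal {f : ℂ → ℂ} {τ : ℝ}
    (hf : ∀ x : ℝ, f (cayley x) = cayley ((x + τ : ℝ) : ℂ)) (n : ℕ) (x : ℝ) :
    f^[n] (cayley x) = cayley ((x + n * τ : ℝ) : ℂ) := by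
  induction n with
  | zero => simp
  | succ n ih =>
    rw [Function.iterate_succ_apply', ih, hf]
    push_cast
    ring_nf

theorem parabolic_invariant_atom_unbounded_general
    (μ : Measure (ℂ × ℂ)) (Λ : Set (ℂ × ℂ)) (A : ℂ → ℂ) (k : ℕ) (g : ℂ × ℂ) (m : ℝ)
    (hΛ : GeodesicLamination Λ)
    (hA : IsDiskMobius A)
    (hparab : ∀ z : ℂ, ‖z‖ ≤ 1 → (A z = z ↔ z = 1))
    (hk : 0 < k)
    (hgΛ : g ∈ Λ) (hcusp : g.1 = 1)
    (hm : 0 < m)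
    (htranslates : ∀ n : ℕ, ENNReal.ofReal m ≤ μ {(A^[k * n] g.1, A^[k * n] g.2)}) :
    mnorm μ = ⊤ := by
  obtain ⟨τ, hτ, hAτ⟩ := hA.exists_translation_of_parabolic hparab
  obtain ⟨-, hg₂, hg₁₂⟩ := hΛ.1 hgΛ
  obtain ⟨x₀, hx₀⟩ := exists_cayley_ofReal_eq hg₂ (hcusp ▸ hg₁₂.symm)
  have hA₁ : A 1 = 1 := (hparab 1 (by simp)).mpr rfl
  refine mnorm_eq_top_of_vertical_atoms μ (ENNReal.ofReal_pos.mpr hm).ne' (τ := k * τ) (x₀ := x₀)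
    (mul_ne_zero (by exact_mod_cast hk.ne') hτ) fun n => ?_
  have h := htranslates n
  rwa [hcusp, Function.iterate_fixed hA₁, ← hx₀, iterate_cayley_ofReal hAτ, Nat.cast_mul,
    mul_comm (k : ℝ), mul_assoc] at h

/-- **A parabolic-invariant lamination with an atom on a geodesic ending at the cusp is
unbounded.**  (Disk model; the cusp is placed at the boundary point `1`, and `A` is a
parabolic Möbius transformation of the disk fixing only `1`.)  Let `μ` be a measured
lamination whose support `Λ` contains a geodesic `g` with an endpoint at the cusp, and
suppose `Λ` is invariant under the powers `A^{kn}` (`n ∈ ℕ`, fixed `k > 0`) of the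
parabolic `A`.  If `g` is an isolated leaf of `Λ` carrying an atom of mass `m > 0` (so
that, by transverse continuity, each translate `A^{kn}(g)` also carries mass at least
`m`), then the transverse measure `μ` is unbounded:
`sup` over unit-length geodesic arcs `I` of `μ(I)` is infinite.  Hence no *bounded*
measured lamination invariant under a parabolic in this way can contain a geodesic
ending at the cusp with positive atomic mass. -/
theorem parabolic_invariant_atom_unbounded
    (μ : Measure (ℂ × ℂ)) (Λ : Set (ℂ × ℂ)) (A : ℂ → ℂ) (k : ℕ) (g : ℂ × ℂ) (m : ℝ)
    (hΛ : GeodesicLamination Λ) (hsupp : μ Λᶜ = 0)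
    (hA : IsDiskMobius A)
    (hparab : ∀ z : ℂ, ‖z‖ ≤ 1 → (A z = z ↔ z = 1))
    (hk : 0 < k)
    (hgΛ : g ∈ Λ) (hcusp : g.1 = 1)
    (hinv : ∀ n : ℕ, ∀ g' ∈ Λ, (A^[k * n] g'.1, A^[k * n] g'.2) ∈ Λ)
    (hisolated : ∃ ε : ℝ, 0 < ε ∧ ∀ g' ∈ Λ, g' ≠ g → ε ≤ dG g g')
    (hm : 0 < m) (hatom : μ {g} = ENNReal.ofReal m)
    (htranslates : ∀ n : ℕ, ENNReal.ofReal m ≤ μ {(A^[k * n] g.1, A^[k * n] g.2)}) :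
    mnorm μ = ⊤ :=
  parabolic_invariant_atom_unbounded_general μ Λ A k g m hΛ hA hparab hk hgΛ hcusp hm htranslates

end
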